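/- Let A be a right-symmetric algebra over a commutative ring K and M an A-module. On the right-symmetric cochain spaces C^{k+1}_{rsym}(A,M) (maps ψ(a₀; a₁,…,a_k), linear in a₀ and alternating multilinear in a₁,…,a_k) define, for i ≥ 1, operators D_i : C^{k}_{rsym}(A,M) → C^{k+1}_{rsym}(A,M) by D_iψ(a₀,a₁,…,a_k) = a₀∘ψ(a_i,a₁,…,â_i,…,a_k) − ψ(a₀∘a_i,a₁,…,â_i,…,a_k) + ψ(a₀,a₁,…,â_i,…,a_k)∘a_i + Σ_{i<j≤k} ψ(a₀,a₁,…,â_i,…,a_{j−1},[a_i,a_j],…,a_k) for i ≤ k, and D_iψ = 0 for i > k. Then the D_i satisfy the pre-simplicial identities D_j D_i = D_i D_{j−1} for all i < j; consequently d_rsym = −Σ_i (−1)^i D_i satisfies d_rsym² = 0. -/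

import Mathlib

open Finset

variable {K A M : Type*} [CommRing K] [AddCommGroup A] [Module K A]
  [AddCommGroup M] [Module K M]

/-- The face operator `D_i` on right-symmetric cochains (written here in 0-based
indexing: `p : Fin (k+1)` corresponds to the paper's index `i = p+1`).  For a
cochain `ψ(a₀; a₁,…,a_k)` (a function of `a₀` and of a `k`-tuple) we have
`D_iψ(a₀,a₁,…,a_{k+1}) = a₀∘ψ(a_i,…â_i…) − ψ(a₀∘a_i,…â_i…) + ψ(a₀,…â_i…)∘a_i
  + Σ_{i<j} ψ(a₀,…,â_i,…,a_{j−1},[a_i,a_j],…)`.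
`mul` is the multiplication of `A`, `r` the right and `l` the left action on `M`. -/
def rsymD (mul : A →ₗ[K] A →ₗ[K] A)
    (r : M →ₗ[K] A →ₗ[K] M) (l : A →ₗ[K] M →ₗ[K] M)
    {k : ℕ} (p : Fin (k + 1)) (ψ : A → (Fin k → A) → M) :
    A → (Fin (k + 1) → A) → M :=
  fun a₀ a =>
    l a₀ (ψ (a p) (p.removeNth a))
      - ψ (mul a₀ (a p)) (p.removeNth a)
      + r (ψ a₀ (p.removeNth a)) (a p)
      + ∑ j : Fin (k + 1),
          if h : p < j then
            ψ a₀ (Function.update (p.removeNth a)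
              (j.pred (by rintro rfl; exact absurd h (Fin.not_lt_zero p)))
              (mul (a p) (a j) - mul (a j) (a p)))
          else 0

/-- The right-symmetric coboundary operator `d_rsym = −Σᵢ(−1)ⁱ Dᵢ`
(in 0-based indexing the sign of `D_{p+1}` is `(−1)^p`). -/
def rsymd (mul : A →ₗ[K] A →ₗ[K] A)
    (r : M →ₗ[K] A →ₗ[K] M) (l : A →ₗ[K] M →ₗ[K] M)
    {k : ℕ} (ψ : A → (Fin k → A) → M) :
    A → (Fin (k + 1) → A) → M :=
  fun a₀ a => ∑ p : Fin (k + 1), ((-1 : ℤ) ^ (p : ℕ)) • rsymD mul r l p ψ a₀ a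

def brk (mul : A →ₗ[K] A →ₗ[K] A) (x y : A) : A := mul x y - mul y x

def rho (mul : A →ₗ[K] A →ₗ[K] A) (r : M →ₗ[K] A →ₗ[K] M) (l : A →ₗ[K] M →ₗ[K] M)
    (x : A) (g : A → M) : A → M :=
  fun z => l z (g x) - g (mul z x) + r (g z) x

theorem rsymD_eq (mul : A →ₗ[K] A →ₗ[K] A)
    (r : M →ₗ[K] A →ₗ[K] M) (l : A →ₗ[K] M →ₗ[K] M)
    {k : ℕ} (p : Fin (k + 1)) (ψ : A → (Fin k → A) → M) (a₀ : A) (a : Fin (k+1) → A) :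
    rsymD mul r l p ψ a₀ a =
      rho mul r l (a p) (fun z => ψ z (p.removeNth a)) a₀
      + ∑ n : Fin (k + 1),
          if h : p < n then
            ψ a₀ (Function.update (p.removeNth a)
              (n.pred (by rintro rfl; exact absurd h (Fin.not_lt_zero p)))
              (brk mul (a p) (a n)))
          else 0 := rfl

lemma rho_apply_add (mul : A →ₗ[K] A →ₗ[K] A) (r : M →ₗ[K] A →ₗ[K] M) (l : A →ₗ[K] M →ₗ[K] M)
    (x : A) (g h : A → M) (z : A) :
    rho mul r l x (fun w => g w + h w) z = rho mul r l x g z + rho mul r l x h z := by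
  simp only [rho, map_add, LinearMap.add_apply]; abel

lemma rho_apply_sum (mul : A →ₗ[K] A →ₗ[K] A) (r : M →ₗ[K] A →ₗ[K] M) (l : A →ₗ[K] M →ₗ[K] M)
    (x : A) {ι : Type*} (s : Finset ι) (f : ι → A → M) (z : A) :
    rho mul r l x (fun w => ∑ n ∈ s, f n w) z = ∑ n ∈ s, rho mul r l x (f n) z := by
  classical
  induction s using Finset.induction with
  | empty => simp [rho]
  | insert _ _ hni ih =>
      rw [Finset.sum_insert hni]
      rw [show (fun w => ∑ n ∈ insert _ _, f n w) = fun w => f _ w + ∑ n ∈ _, f n w from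
        funext fun w => Finset.sum_insert hni]
      rw [rho_apply_add, ih]

lemma rho_brk (mul : A →ₗ[K] A →ₗ[K] A)
    (hrs : ∀ a b c : A,
      mul (mul a b) c - mul a (mul b c) = mul (mul a c) b - mul a (mul c b))
    (r : M →ₗ[K] A →ₗ[K] M) (l : A →ₗ[K] M →ₗ[K] M)
    (hMAA : ∀ (m : M) (a b : A),
      r m (mul a b - mul b a) - r (r m a) b + r (r m b) a = 0)
    (hAAM : ∀ (a b : A) (m : M),
      r (l a m) b - l a (r m b) - l (mul a b) m + l a (l b m) = 0)
    (x y : A) (g : A → M) (hg : ∀ u v, g (u - v) = g u - g v) (z : A) :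
    rho mul r l y (rho mul r l x g) z
      = rho mul r l x (rho mul r l y g) z + rho mul r l (brk mul x y) g z := by
  have h0 : g 0 = 0 := by simpa using hg 0 0
  have hadd : ∀ u v, g (u + v) = g u + g v := by
    intro u v
    have hn : g (-v) = -g v := by simpa [h0] using hg 0 v
    rw [show u + v = u - -v by abel, hg, hn, sub_neg_eq_add]
  have h1 : r (g z) (mul x y) - r (g z) (mul y x) - r (r (g z) x) y + r (r (g z) y) x = 0 := by
    simpa [map_sub, LinearMap.sub_apply] using hMAA (g z) x y
  have h3 := hAAM z y (g x)
  have h4 := hAAM z x (g y)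
  have h2 : (g (mul (mul z y) x) + g (mul z (mul x y)))
      - (g (mul (mul z x) y) + g (mul z (mul y x))) = 0 := by
    rw [sub_eq_zero, ← hadd, ← hadd]
    congr 1
    have := hrs z y x
    rw [sub_eq_sub_iff_add_eq_add] at this
    exact this
  rw [← sub_eq_zero]
  calc rho mul r l y (rho mul r l x g) z
      - (rho mul r l x (rho mul r l y g) z + rho mul r l (brk mul x y) g z)
      = (r (l z (g x)) y - l z (r (g x) y) - l (mul z y) (g x) + l z (l y (g x)))
        - (r (l z (g y)) x - l z (r (g y) x) - l (mul z x) (g y) + l z (l x (g y)))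
        - (r (g z) (mul x y) - r (g z) (mul y x) - r (r (g z) x) y + r (r (g z) y) x)
        + ((g (mul (mul z y) x) + g (mul z (mul x y)))
          - (g (mul (mul z x) y) + g (mul z (mul y x)))) := by
        simp only [rho, brk, map_sub, map_add, LinearMap.sub_apply, LinearMap.add_apply, hg, hadd]
        abel
    _ = 0 := by rw [h3, h4, h1, h2]; simp

lemma brk_jacobi (mul : A →ₗ[K] A →ₗ[K] A)
    (hrs : ∀ a b c : A,
      mul (mul a b) c - mul a (mul b c) = mul (mul a c) b - mul a (mul c b))
    (x y z : A) :
    brk mul x (brk mul y z) = brk mul y (brk mul x z) + brk mul (brk mul x y) z := by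
  have h1 := hrs x y z
  have h2 := hrs y x z
  have h3 := hrs z x y
  rw [← sub_eq_zero]
  calc brk mul x (brk mul y z) - (brk mul y (brk mul x z) + brk mul (brk mul x y) z)
      = -(((mul (mul x y) z - mul x (mul y z)) - (mul (mul x z) y - mul x (mul z y)))
        - ((mul (mul y x) z - mul y (mul x z)) - (mul (mul y z) x - mul y (mul z x)))
        + ((mul (mul z x) y - mul z (mul x y)) - (mul (mul z y) x - mul z (mul y x)))) := by
        simp only [brk, map_sub, map_add, LinearMap.sub_apply, LinearMap.add_apply]
        abel
    _ = 0 := by rw [h1, h2, h3]; abel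


lemma val_succAbove {m : ℕ} (p : Fin (m+1)) (q : Fin m) :
    (p.succAbove q).val = if q.val < p.val then q.val else q.val + 1 := by
  rcases lt_or_ge (q.castSucc) p with h|h
  · rw [Fin.succAbove_of_castSucc_lt _ _ h]
    simp only [Fin.lt_def, Fin.coe_castSucc] at h
    simp [h]
  · rw [Fin.succAbove_of_le_castSucc _ _ h]
    simp only [Fin.le_def, Fin.coe_castSucc] at h
    rw [Fin.val_succ, if_neg (by omega)]

lemma removeNth_update_succAbove {α : Type*} {m : ℕ} (p : Fin (m+1)) (t : Fin m)
    (v : Fin (m+1) → α) (w : α) :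
    p.removeNth (Function.update v (p.succAbove t) w) = Function.update (p.removeNth v) t w := by
  funext q
  show (Function.update v (p.succAbove t) w) (p.succAbove q) = _
  rcases eq_or_ne q t with rfl|hq
  · simp
  · rw [Function.update_of_ne (fun e => hq (Fin.succAbove_right_injective e)),
      Function.update_of_ne hq]
    rfl

lemma dite_sum' {C : Prop} [Decidable C] {ι : Type*} (s : Finset ι) (f : C → ι → M) :
    (if h : C then ∑ x ∈ s, f h x else 0) = ∑ x ∈ s, (if h : C then f h x else 0) := by
  split
  · rfl
  · simp

lemma dite_add' {C : Prop} [Decidable C] (f g : C → M) :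
    (if h : C then f h + g h else 0) = (if h : C then f h else 0) + (if h : C then g h else 0) := by
  split <;> simp

lemma rho_apply_zero (mul : A →ₗ[K] A →ₗ[K] A) (r : M →ₗ[K] A →ₗ[K] M) (l : A →ₗ[K] M →ₗ[K] M)
    (x : A) (z : A) : rho mul r l x (fun _ => (0:M)) z = 0 := by simp [rho]

theorem part1 (mul : A →ₗ[K] A →ₗ[K] A)
    (hrs : ∀ a b c : A,
      mul (mul a b) c - mul a (mul b c) = mul (mul a c) b - mul a (mul c b))
    (r : M →ₗ[K] A →ₗ[K] M) (l : A →ₗ[K] M →ₗ[K] M)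
    (hMAA : ∀ (m : M) (a b : A),
      r m (mul a b - mul b a) - r (r m a) b + r (r m b) a = 0)
    (hAAM : ∀ (a b : A) (m : M),
      r (l a m) b - l a (r m b) - l (mul a b) m + l a (l b m) = 0)
    {k : ℕ} (ψ : A → (Fin k → A) → M)
    (hψsub : ∀ (u v : A) (t : Fin k → A), ψ (u - v) t = ψ u t - ψ v t)
    (hψslot : ∀ (z : A) (t : Fin k → A) (s : Fin k) (w₁ w₂ : A),
      ψ z (Function.update t s (w₁ + w₂))
        = ψ z (Function.update t s w₁) + ψ z (Function.update t s w₂))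
    (i j : Fin (k + 1)) (hij : (i : ℕ) ≤ (j : ℕ)) (a₀ : A) (a : Fin (k + 2) → A) :
    rsymD mul r l j.succ (rsymD mul r l i ψ) a₀ a
      = rsymD mul r l i.castSucc (rsymD mul r l j ψ) a₀ a := by
  have hbiB : (Fin.removeNth (Fin.succ j) a) i = (a (Fin.castSucc i)) := by
    show a (Fin.succAbove (Fin.succ j) i) = (a (Fin.castSucc i))
    congr 1
    exact Fin.succAbove_of_castSucc_lt _ _ (by simp only [Fin.lt_def, Fin.coe_castSucc, Fin.val_succ]; omega)
  have hb2jB : (Fin.removeNth (Fin.castSucc i) a) j = (a (Fin.succ j)) := by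
    show a (Fin.succAbove (Fin.castSucc i) j) = (a (Fin.succ j))
    congr 1
    exact Fin.succAbove_of_le_castSucc _ _ (by simp only [Fin.le_def, Fin.coe_castSucc]; omega)
  have hb2succ : ∀ n : Fin (k+1), (i:ℕ) < (n:ℕ) → (Fin.removeNth (Fin.castSucc i) a) n = a (Fin.succ n) := by
    intro n hn
    show a (Fin.succAbove (Fin.castSucc i) n) = _
    congr 1
    exact Fin.succAbove_of_le_castSucc _ _ (by simp only [Fin.le_def, Fin.coe_castSucc]; omega)
  have hcc : Fin.removeNth j (Fin.removeNth (Fin.castSucc i) a) = (Fin.removeNth i (Fin.removeNth (Fin.succ j) a)) := by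
    funext q
    show a (Fin.succAbove (Fin.castSucc i) (Fin.succAbove j q)) = a (Fin.succAbove (Fin.succ j) (Fin.succAbove i q))
    congr 1
    apply Fin.ext
    simp only [val_succAbove, Fin.coe_castSucc, Fin.val_succ]
    split_ifs <;> omega
  have hP1 : rho mul r l (a (Fin.succ j)) (fun z => rsymD mul r l i ψ z (Fin.removeNth (Fin.succ j) a)) a₀ = rho mul r l (a (Fin.succ j)) (rho mul r l (a (Fin.castSucc i)) (fun z => ψ z (Fin.removeNth i (Fin.removeNth (Fin.succ j) a)))) a₀ + (∑ n : Fin (k+1), (if h : i < n then rho mul r l (a (Fin.succ j)) (fun z => ψ z (Function.update (Fin.removeNth i (Fin.removeNth (Fin.succ j) a)) (n.pred (by rintro rfl; exact absurd h (Fin.not_lt_zero _))) (brk mul (a (Fin.castSucc i)) (a (Fin.succAbove (Fin.succ j) n))))) a₀ else 0)) := by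
    have e0 : (fun z => rsymD mul r l i ψ z (Fin.removeNth (Fin.succ j) a))
        = fun z => rho mul r l ((Fin.removeNth (Fin.succ j) a) i) (fun z => ψ z (Fin.removeNth i (Fin.removeNth (Fin.succ j) a))) z
          + ∑ n : Fin (k+1), (if h : i < n then
              ψ z (Function.update (Fin.removeNth i (Fin.removeNth (Fin.succ j) a)) (n.pred (by rintro rfl; exact absurd h (Fin.not_lt_zero _))) (brk mul ((Fin.removeNth (Fin.succ j) a) i) ((Fin.removeNth (Fin.succ j) a) n))) else 0) :=
      funext fun z => rsymD_eq mul r l i ψ z (Fin.removeNth (Fin.succ j) a)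
    rw [e0, rho_apply_add, rho_apply_sum, hbiB]
    congr 1
    apply Finset.sum_congr rfl
    intro n _
    by_cases hn : i < n
    · simp only [dif_pos hn]
      rfl
    · simp only [dif_neg hn]
      exact rho_apply_zero mul r l _ _
  have hQ1 : rho mul r l (a (Fin.castSucc i)) (fun z => rsymD mul r l j ψ z (Fin.removeNth (Fin.castSucc i) a)) a₀ = rho mul r l (a (Fin.castSucc i)) (rho mul r l (a (Fin.succ j)) (fun z => ψ z (Fin.removeNth i (Fin.removeNth (Fin.succ j) a)))) a₀ + (∑ n : Fin (k+1), (if h : j < n then rho mul r l (a (Fin.castSucc i)) (fun z => ψ z (Function.update (Fin.removeNth i (Fin.removeNth (Fin.succ j) a)) (n.pred (by rintro rfl; exact absurd h (Fin.not_lt_zero _))) (brk mul (a (Fin.succ j)) (a (Fin.succ n))))) a₀ else 0)) := by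
    have e0 : (fun z => rsymD mul r l j ψ z (Fin.removeNth (Fin.castSucc i) a))
        = fun z => rho mul r l ((Fin.removeNth (Fin.castSucc i) a) j) (fun w => ψ w (Fin.removeNth j (Fin.removeNth (Fin.castSucc i) a))) z
          + ∑ n : Fin (k+1), (if h : j < n then
              ψ z (Function.update (Fin.removeNth j (Fin.removeNth (Fin.castSucc i) a)) (n.pred (by rintro rfl; exact absurd h (Fin.not_lt_zero _))) (brk mul ((Fin.removeNth (Fin.castSucc i) a) j) ((Fin.removeNth (Fin.castSucc i) a) n))) else 0) :=
      funext fun z => rsymD_eq mul r l j ψ z (Fin.removeNth (Fin.castSucc i) a)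
    rw [e0, rho_apply_add, rho_apply_sum, hb2jB, hcc]
    congr 1
    apply Finset.sum_congr rfl
    intro n _
    by_cases hn : j < n
    · simp only [dif_pos hn]
      rw [hb2succ n (by simp only [Fin.lt_def] at hn; omega)]
    · simp only [dif_neg hn]
      exact rho_apply_zero mul r l _ _
  have hP2 : (∑ m : Fin (k + 1 + 1), (if h : (Fin.succ j) < m then rsymD mul r l i ψ a₀ (Function.update (Fin.removeNth (Fin.succ j) a) (m.pred (by rintro rfl; exact absurd h (Fin.not_lt_zero _))) (brk mul (a (Fin.succ j)) (a m))) else 0)) = (∑ n : Fin (k+1), (if h : j < n then rho mul r l (a (Fin.castSucc i)) (fun z => ψ z (Function.update (Fin.removeNth i (Fin.removeNth (Fin.succ j) a)) (n.pred (by rintro rfl; exact absurd h (Fin.not_lt_zero _))) (brk mul (a (Fin.succ j)) (a (Fin.succ n))))) a₀ else 0)) + (∑ n1 : Fin (k+1), (if h : j < n1 then (∑ n : Fin (k+1), (if h2 : i < n then ψ a₀ (Function.update (Function.update (Fin.removeNth i (Fin.removeNth (Fin.succ j) a)) (n1.pred (by rintro rfl; exact absurd h (Fin.not_lt_zero _)))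 (brk mul (a (Fin.succ j)) (a (Fin.succ n1)))) (n.pred (by rintro rfl; exact absurd h2 (Fin.not_lt_zero _))) (brk mul (a (Fin.castSucc i)) ((Function.update (Fin.removeNth (Fin.succ j) a) n1 (brk mul (a (Fin.succ j)) (a (Fin.succ n1)))) n))) else 0)) else 0)) := by
    rw [Fin.sum_univ_succAbove _ (Fin.succ j), dif_neg (lt_irrefl (Fin.succ j)), zero_add,
      ← Finset.sum_add_distrib]
    apply Finset.sum_congr rfl
    intro n1 _
    by_cases hn1 : j < n1
    · have hn1' : (j:ℕ) < (n1:ℕ) := hn1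
      have hs : Fin.succAbove (Fin.succ j) n1 = Fin.succ n1 :=
        Fin.succAbove_of_le_castSucc _ _ (by simp only [Fin.le_def, Fin.coe_castSucc, Fin.val_succ]; omega)
      rw [hs, dif_pos (show Fin.succ j < Fin.succ n1 from by simp only [Fin.lt_def, Fin.val_succ]; omega),
        dif_pos hn1, dif_pos hn1]
      simp only [Fin.pred_succ]
      rw [rsymD_eq]
      have hUi : Function.update (Fin.removeNth (Fin.succ j) a) n1 (brk mul (a (Fin.succ j)) (a (Fin.succ n1))) i = (a (Fin.castSucc i)) := by
        rw [Function.update_of_ne (show i ≠ n1 from by rintro rfl; simp only [Fin.lt_def] at hn1; omega), hbiB]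
      have hremU : Fin.removeNth i (Function.update (Fin.removeNth (Fin.succ j) a) n1 (brk mul (a (Fin.succ j)) (a (Fin.succ n1))))
          = Function.update (Fin.removeNth i (Fin.removeNth (Fin.succ j) a)) (n1.pred (by rintro rfl; exact absurd hn1 (Fin.not_lt_zero _))) (brk mul (a (Fin.succ j)) (a (Fin.succ n1))) := by
        have h2 : Function.update (Fin.removeNth (Fin.succ j) a) n1 (brk mul (a (Fin.succ j)) (a (Fin.succ n1)))
            = Function.update (Fin.removeNth (Fin.succ j) a) (Fin.succAbove i (n1.pred (by rintro rfl; exact absurd hn1 (Fin.not_lt_zero _)))) (brk mul (a (Fin.succ j)) (a (Fin.succ n1))) := by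
          rw [Fin.succAbove_pred_of_lt i n1 (show i < n1 from by simp only [Fin.lt_def]; omega)]
        rw [h2, removeNth_update_succAbove]
      rw [hUi, hremU]
    · rw [dif_neg hn1, dif_neg hn1, add_zero]
      rw [dif_neg (show ¬ (Fin.succ j < Fin.succAbove (Fin.succ j) n1) from ?_)]
      intro hlt
      rw [Fin.lt_def, val_succAbove] at hlt
      simp only [Fin.val_succ] at hlt
      simp only [Fin.lt_def, not_lt] at hn1
      split_ifs at hlt <;> omega
  have hQ2 : (∑ m : Fin (k + 1 + 1), (if h : (Fin.castSucc i) < m then rsymD mul r l j ψ a₀ (Function.update (Fin.removeNth (Fin.castSucc i) a) (m.pred (by rintro rfl; exact absurd h (Fin.not_lt_zero _))) (brk mul (a (Fin.castSucc i)) (a m))) else 0)) = ((rho mul r l (brk mul (a (Fin.castSucc i)) (a (Fin.succ j))) (fun z => ψ z (Fin.removeNth i (Fin.removeNth (Fin.succ j) a))) a₀) + (∑ n : Fin (k+1), (if h : j < n then ψ a₀ (Function.update (Fin.removeNth i (Fin.removeNth (Fin.succ j) a)) (n.pred (by rintro rfl; exact absurd h (Fin.not_lt_zero _))) (brk mul (brk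 mul (a (Fin.castSucc i)) (a (Fin.succ j))) (a (Fin.succ n)))) else 0))) + ((∑ n : Fin (k+1), (if h : i < n then rho mul r l (a (Fin.succ j)) (fun z => ψ z (Function.update (Fin.removeNth i (Fin.removeNth (Fin.succ j) a)) (n.pred (by rintro rfl; exact absurd h (Fin.not_lt_zero _))) (brk mul (a (Fin.castSucc i)) (a (Fin.succAbove (Fin.succ j) n))))) a₀ else 0)) + (∑ n : Fin (k+1), (if h : i < n then (∑ n2 : Fin (k+1), (if h2 : j < n2 then ψ a₀ (Function.update (Function.update (Fin.removeNth i (Fin.removeNth (Fin.succ j) a)) (n.pred (by rintro rfl; exact absurd h (Fin.not_lt_zero _))) (brk mul (a (Fin.castSucc i)) (a (Fin.succAbove (Fin.succ j) n)))) (n2.pred (by rintro rfl; exact absurd h2 (Fin.not_lt_zero _))) (brk mul (a (Fin.succ j)) ((Function.update (Fin.removeNth (Fin.castSucc i) a) (Fin.succAbove j (n.pred (by rintro rfl; exact absurd h (Fin.not_lt_zero _)))) (brk mul (a (Fin.castSucc i)) (a (Fin.succAbove (Fin.succ j) n)))) n2))) else 0)) else 0))) := by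
    rw [Fin.sum_univ_succAbove _ (Fin.succ j)]
    congr 1
    · rw [dif_pos (show Fin.castSucc i < Fin.succ j from by simp only [Fin.lt_def, Fin.coe_castSucc, Fin.val_succ]; omega)]
      simp only [Fin.pred_succ]
      rw [rsymD_eq]
      have hU1 : Function.update (Fin.removeNth (Fin.castSucc i) a) j (brk mul (a (Fin.castSucc i)) (a (Fin.succ j))) j = (brk mul (a (Fin.castSucc i)) (a (Fin.succ j))) := Function.update_self _ _ _
      have hU2 : Fin.removeNth j (Function.update (Fin.removeNth (Fin.castSucc i) a) j (brk mul (a (Fin.castSucc i)) (a (Fin.succ j)))) = (Fin.removeNth i (Fin.removeNth (Fin.succ j) a)) := by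
        rw [Fin.removeNth_update, hcc]
      rw [hU1, hU2]
      congr 1
      apply Finset.sum_congr rfl
      intro n2 _
      by_cases h2 : j < n2
      · rw [dif_pos h2, dif_pos h2,
          Function.update_of_ne (show n2 ≠ j from by rintro rfl; exact lt_irrefl _ h2),
          hb2succ n2 (by simp only [Fin.lt_def] at h2 ⊢; omega)]
      · rw [dif_neg h2, dif_neg h2]
    · rw [← Finset.sum_add_distrib]
      apply Finset.sum_congr rfl
      intro n _
      by_cases hn : i < n
      · have hn' : (i:ℕ) < (n:ℕ) := hn
        have hlt : Fin.castSucc i < Fin.succAbove (Fin.succ j) n := by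
          rw [Fin.lt_def, val_succAbove]
          simp only [Fin.coe_castSucc, Fin.val_succ]
          split_ifs <;> omega
        rw [dif_pos hlt, dif_pos hn, dif_pos hn]
        have hsl : (Fin.succAbove (Fin.succ j) n).pred
              (by rintro e; rw [e] at hlt; exact absurd hlt (Fin.not_lt_zero _))
            = Fin.succAbove j (n.pred (by rintro rfl; exact absurd hn (Fin.not_lt_zero _))) := by
          apply Fin.ext
          rw [Fin.coe_pred, val_succAbove, val_succAbove, Fin.coe_pred]
          simp only [Fin.val_succ]
          split_ifs <;> omega
        rw [hsl, rsymD_eq]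
        have hVj : Function.update (Fin.removeNth (Fin.castSucc i) a) (Fin.succAbove j (n.pred (by rintro rfl; exact absurd hn (Fin.not_lt_zero _)))) (brk mul (a (Fin.castSucc i)) (a (Fin.succAbove (Fin.succ j) n))) j = (a (Fin.succ j)) := by
          rw [Function.update_of_ne (Fin.ne_succAbove j _), hb2jB]
        have hremV : Fin.removeNth j (Function.update (Fin.removeNth (Fin.castSucc i) a) (Fin.succAbove j (n.pred (by rintro rfl; exact absurd hn (Fin.not_lt_zero _)))) (brk mul (a (Fin.castSucc i)) (a (Fin.succAbove (Fin.succ j) n))))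
            = Function.update (Fin.removeNth i (Fin.removeNth (Fin.succ j) a)) (n.pred (by rintro rfl; exact absurd hn (Fin.not_lt_zero _))) (brk mul (a (Fin.castSucc i)) (a (Fin.succAbove (Fin.succ j) n))) := by
          rw [removeNth_update_succAbove, hcc]
        rw [hVj, hremV]
      · rw [dif_neg hn, dif_neg hn, add_zero]
        rw [dif_neg (show ¬ (Fin.castSucc i < Fin.succAbove (Fin.succ j) n) from ?_)]
        intro hlt
        rw [Fin.lt_def, val_succAbove] at hlt
        simp only [Fin.coe_castSucc, Fin.val_succ] at hlt
        simp only [Fin.lt_def, not_lt] at hn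
        split_ifs at hlt <;> omega
  have hM : rho mul r l (a (Fin.succ j)) (rho mul r l (a (Fin.castSucc i)) (fun z => ψ z (Fin.removeNth i (Fin.removeNth (Fin.succ j) a)))) a₀ = rho mul r l (a (Fin.castSucc i)) (rho mul r l (a (Fin.succ j)) (fun z => ψ z (Fin.removeNth i (Fin.removeNth (Fin.succ j) a)))) a₀ + rho mul r l (brk mul (a (Fin.castSucc i)) (a (Fin.succ j))) (fun z => ψ z (Fin.removeNth i (Fin.removeNth (Fin.succ j) a))) a₀ :=
    rho_brk mul hrs r l hMAA hAAM (a (Fin.castSucc i)) (a (Fin.succ j)) (fun z => ψ z (Fin.removeNth i (Fin.removeNth (Fin.succ j) a))) (fun u v => hψsub u v (Fin.removeNth i (Fin.removeNth (Fin.succ j) a))) a₀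
  have hD : (∑ n1 : Fin (k+1), (if h : j < n1 then (∑ n : Fin (k+1), (if h2 : i < n then ψ a₀ (Function.update (Function.update (Fin.removeNth i (Fin.removeNth (Fin.succ j) a)) (n1.pred (by rintro rfl; exact absurd h (Fin.not_lt_zero _))) (brk mul (a (Fin.succ j)) (a (Fin.succ n1)))) (n.pred (by rintro rfl; exact absurd h2 (Fin.not_lt_zero _))) (brk mul (a (Fin.castSucc i)) ((Function.update (Fin.removeNth (Fin.succ j) a) n1 (brk mul (a (Fin.succ j)) (a (Fin.succ n1)))) n))) else 0)) else 0)) = (∑ n : Fin (k+1), (if h : i < n then (∑ n2 : Fin (k+1), (if h2 : j < n2 then ψ a₀ (Function.update (Function.update (Fin.removeNth i (Fin.removeNth (Fin.succ j) a)) (n.pred (by rintro rfl; exact absurd h (Fin.not_lt_zero _))) (brk mul (a (Fin.castSucc i)) (a (Fin.succAbove (Fin.succ j) n)))) (n2.pred (by rintro rfl; exact absurd h2 (Fin.not_lt_zero _))) (brk mul (a (Fin.succ j)) ((Function.update (Fin.removeNth (Fin.castSucc i) a) (Fin.succAbove j (n.pred (by rintro rfl; exact absurd h (Fin.not_lt_zero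 _)))) (brk mul (a (Fin.castSucc i)) (a (Fin.succAbove (Fin.succ j) n)))) n2))) else 0)) else 0)) + (∑ n : Fin (k+1), (if h : j < n then ψ a₀ (Function.update (Fin.removeNth i (Fin.removeNth (Fin.succ j) a)) (n.pred (by rintro rfl; exact absurd h (Fin.not_lt_zero _))) (brk mul (brk mul (a (Fin.castSucc i)) (a (Fin.succ j))) (a (Fin.succ n)))) else 0)) := by
    rw [show (∑ n1 : Fin (k+1), (if h : j < n1 then (∑ n : Fin (k+1), (if h2 : i < n then ψ a₀ (Function.update (Function.update (Fin.removeNth i (Fin.removeNth (Fin.succ j) a)) (n1.pred (by rintro rfl; exact absurd h (Fin.not_lt_zero _))) (brk mul (a (Fin.succ j)) (a (Fin.succ n1)))) (n.pred (by rintro rfl; exact absurd h2 (Fin.not_lt_zero _))) (brk mul (a (Fin.castSucc i)) ((Function.update (Fin.removeNth (Fin.succ j) a) n1 (brk mul (a (Fin.succ j)) (a (Fin.succ n1)))) n))) else 0)) else 0)) = ∑ n1 : Fin (k+1), ∑ n : Fin (k+1), (if h : j < n1 then (if h2 : i < n then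
        ψ a₀ (Function.update (Function.update (Fin.removeNth i (Fin.removeNth (Fin.succ j) a)) (n1.pred (by rintro rfl; exact absurd h (Fin.not_lt_zero _))) (brk mul (a (Fin.succ j)) (a (Fin.succ n1)))) (n.pred (by rintro rfl; exact absurd h2 (Fin.not_lt_zero _))) (brk mul (a (Fin.castSucc i)) ((Function.update (Fin.removeNth (Fin.succ j) a) n1 (brk mul (a (Fin.succ j)) (a (Fin.succ n1)))) n))) else 0) else 0) from Finset.sum_congr rfl (fun n1 _ => dite_sum' _ _),
      Finset.sum_comm]
    have key : ∀ n n1 : Fin (k+1),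
        (if h : j < n1 then (if h2 : i < n then ψ a₀ (Function.update (Function.update (Fin.removeNth i (Fin.removeNth (Fin.succ j) a)) (n1.pred (by rintro rfl; exact absurd h (Fin.not_lt_zero _))) (brk mul (a (Fin.succ j)) (a (Fin.succ n1)))) (n.pred (by rintro rfl; exact absurd h2 (Fin.not_lt_zero _))) (brk mul (a (Fin.castSucc i)) ((Function.update (Fin.removeNth (Fin.succ j) a) n1 (brk mul (a (Fin.succ j)) (a (Fin.succ n1)))) n))) else 0) else 0)
        = (if h : i < n then (if h2 : j < n1 then ψ a₀ (Function.update (Function.update (Fin.removeNth i (Fin.removeNth (Fin.succ j) a)) (n.pred (by rintro rfl; exact absurd h (Fin.not_lt_zero _))) (brk mul (a (Fin.castSucc i)) (a (Fin.succAbove (Fin.succ j) n)))) (n1.pred (by rintro rfl; exact absurd h2 (Fin.not_lt_zero _))) (brk mul (a (Fin.succ j)) ((Function.update (Fin.removeNth (Fin.castSucc i) a) (Fin.succAbove j (n.pred (by rintro rfl; exact absurd h (Fin.not_lt_zero _)))) (brk mul (a (Fin.castSucc i)) (a (Fin.succAbove (Fin.succ j) n)))) n1))) else 0) else 0)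
          + (if n1 = n then (if h : j < n1 then
              ψ a₀ (Function.update (Fin.removeNth i (Fin.removeNth (Fin.succ j) a)) (n1.pred (by rintro rfl; exact absurd h (Fin.not_lt_zero _))) (brk mul (brk mul (a (Fin.castSucc i)) (a (Fin.succ j))) (a (Fin.succ n1)))) else 0) else 0) := by
      intro n n1
      by_cases hd : n1 = n
      · rw [hd, if_pos rfl]
        by_cases hj : j < n
        · have hi : i < n := by simp only [Fin.lt_def] at hj ⊢; omega
          have hi' : (i:ℕ) < (n:ℕ) := hi
          have hj' : (j:ℕ) < (n:ℕ) := hj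
          simp only [dif_pos hj, dif_pos hi]
          rw [Function.update_self]
          have e1 : Fin.succAbove j (n.pred (by rintro rfl; exact absurd hi (Fin.not_lt_zero _))) = n := by
            apply Fin.ext
            rw [val_succAbove, Fin.coe_pred]
            split_ifs <;> omega
          rw [e1, Function.update_self]
          have e2 : Fin.succAbove (Fin.succ j) n = Fin.succ n :=
            Fin.succAbove_of_le_castSucc _ _ (by simp only [Fin.le_def, Fin.coe_castSucc, Fin.val_succ]; omega)
          rw [e2, Function.update_idem, Function.update_idem, brk_jacobi mul hrs, hψslot]
        · simp only [dif_neg hj]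
          simp
      · rw [if_neg hd, add_zero]
        have hd' : (n1:ℕ) ≠ (n:ℕ) := fun e => hd (Fin.ext e)
        by_cases h1 : j < n1
        · by_cases h2 : i < n
          · have h1' : (j:ℕ) < (n1:ℕ) := h1
            have h2' : (i:ℕ) < (n:ℕ) := h2
            simp only [dif_pos h1, dif_pos h2]
            rw [Function.update_of_ne (show n ≠ n1 from fun e => hd e.symm)]
            have hne3 : n1 ≠ Fin.succAbove j (n.pred (by rintro rfl; exact absurd h2 (Fin.not_lt_zero _))) := by
              intro e
              have := congrArg Fin.val e
              rw [val_succAbove, Fin.coe_pred] at this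
              split_ifs at this <;> omega
            have e3 : (Function.update (Fin.removeNth (Fin.castSucc i) a) (Fin.succAbove j (n.pred (by rintro rfl; exact absurd h2 (Fin.not_lt_zero _)))) (brk mul (a (Fin.castSucc i)) (a (Fin.succAbove (Fin.succ j) n)))) n1 = a (Fin.succ n1) := by
              rw [Function.update_of_ne hne3, hb2succ n1 (by omega)]
            rw [e3]
            have hnep : ((n1.pred (by rintro rfl; exact absurd h1 (Fin.not_lt_zero _))) : Fin k) ≠ (n.pred (by rintro rfl; exact absurd h2 (Fin.not_lt_zero _))) := by
              intro e
              have := congrArg Fin.val e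
              rw [Fin.coe_pred, Fin.coe_pred] at this
              omega
            rw [Function.update_comm hnep]
            rfl
          · simp [h1, h2]
        · simp [h1]
    rw [Finset.sum_congr rfl (fun n _ => Finset.sum_congr rfl (fun n1 _ => key n n1))]
    rw [show (∑ n : Fin (k+1), ∑ n1 : Fin (k+1),
        ((if h : i < n then (if h2 : j < n1 then ψ a₀ (Function.update (Function.update (Fin.removeNth i (Fin.removeNth (Fin.succ j) a)) (n.pred (by rintro rfl; exact absurd h (Fin.not_lt_zero _))) (brk mul (a (Fin.castSucc i)) (a (Fin.succAbove (Fin.succ j) n)))) (n1.pred (by rintro rfl; exact absurd h2 (Fin.not_lt_zero _))) (brk mul (a (Fin.succ j)) ((Function.update (Fin.removeNth (Fin.castSucc i) a) (Fin.succAbove j (n.pred (by rintro rfl; exact absurd h (Fin.not_lt_zero _)))) (brk mul (a (Fin.castSucc i)) (a (Fin.succAbove (Fin.succ j) n)))) n1))) else 0) else 0)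
          + (if n1 = n then (if h : j < n1 then
              ψ a₀ (Function.update (Fin.removeNth i (Fin.removeNth (Fin.succ j) a)) (n1.pred (by rintro rfl; exact absurd h (Fin.not_lt_zero _))) (brk mul (brk mul (a (Fin.castSucc i)) (a (Fin.succ j))) (a (Fin.succ n1)))) else 0) else 0)))
        = ∑ n : Fin (k+1),
          ((∑ n1 : Fin (k+1), (if h : i < n then (if h2 : j < n1 then ψ a₀ (Function.update (Function.update (Fin.removeNth i (Fin.removeNth (Fin.succ j) a)) (n.pred (by rintro rfl; exact absurd h (Fin.not_lt_zero _))) (brk mul (a (Fin.castSucc i)) (a (Fin.succAbove (Fin.succ j) n)))) (n1.pred (by rintro rfl; exact absurd h2 (Fin.not_lt_zero _))) (brk mul (a (Fin.succ j)) ((Function.update (Fin.removeNth (Fin.castSucc i) a) (Fin.succAbove j (n.pred (by rintro rfl; exact absurd h (Fin.not_lt_zero _)))) (brk mul (a (Fin.castSucc i)) (a (Fin.succAbove (Fin.succ j) n)))) n1))) else 0) else 0))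
          + (∑ n1 : Fin (k+1), (if n1 = n then (if h : j < n1 then
              ψ a₀ (Function.update (Fin.removeNth i (Fin.removeNth (Fin.succ j) a)) (n1.pred (by rintro rfl; exact absurd h (Fin.not_lt_zero _))) (brk mul (brk mul (a (Fin.castSucc i)) (a (Fin.succ j))) (a (Fin.succ n1)))) else 0) else 0)))
        from Finset.sum_congr rfl (fun n _ => Finset.sum_add_distrib), Finset.sum_add_distrib]
    congr 1
    · apply Finset.sum_congr rfl
      intro n _
      exact (dite_sum' _ _).symm
    · apply Finset.sum_congr rfl
      intro n _
      rw [Finset.sum_ite_eq' Finset.univ n]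
      simp
  rw [rsymD_eq mul r l (Fin.succ j) (rsymD mul r l i ψ) a₀ a,
    rsymD_eq mul r l (Fin.castSucc i) (rsymD mul r l j ψ) a₀ a, hP1, hQ1, hP2, hQ2, hM, hD]
  abel

lemma rsymD_add (mul : A →ₗ[K] A →ₗ[K] A)
    (r : M →ₗ[K] A →ₗ[K] M) (l : A →ₗ[K] M →ₗ[K] M)
    {k : ℕ} (p : Fin (k+1)) (F G : A → (Fin k → A) → M) (a₀ : A) (a : Fin (k+1) → A) :
    rsymD mul r l p (fun x y => F x y + G x y) a₀ a
      = rsymD mul r l p F a₀ a + rsymD mul r l p G a₀ a := by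
  simp only [rsymD, map_add, LinearMap.add_apply]
  rw [show (∑ n : Fin (k+1), if h : p < n then F a₀ (Function.update (Fin.removeNth p a) (n.pred (by rintro rfl; exact absurd h (Fin.not_lt_zero _))) (mul (a p) (a n) - mul (a n) (a p))) + G a₀ (Function.update (Fin.removeNth p a) (n.pred (by rintro rfl; exact absurd h (Fin.not_lt_zero _))) (mul (a p) (a n) - mul (a n) (a p))) else 0)
      = (∑ n : Fin (k+1), if h : p < n then F a₀ (Function.update (Fin.removeNth p a) (n.pred (by rintro rfl; exact absurd h (Fin.not_lt_zero _))) (mul (a p) (a n) - mul (a n) (a p))) else 0)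
        + (∑ n : Fin (k+1), if h : p < n then G a₀ (Function.update (Fin.removeNth p a) (n.pred (by rintro rfl; exact absurd h (Fin.not_lt_zero _))) (mul (a p) (a n) - mul (a n) (a p))) else 0) from by
    rw [← Finset.sum_add_distrib]
    exact Finset.sum_congr rfl (fun n _ => by split <;> simp)]
  abel

lemma rsymD_zsmul (mul : A →ₗ[K] A →ₗ[K] A)
    (r : M →ₗ[K] A →ₗ[K] M) (l : A →ₗ[K] M →ₗ[K] M)
    {k : ℕ} (p : Fin (k+1)) (c : ℤ) (F : A → (Fin k → A) → M) (a₀ : A) (a : Fin (k+1) → A) :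
    rsymD mul r l p (fun x y => c • F x y) a₀ a = c • rsymD mul r l p F a₀ a := by
  simp only [rsymD, map_zsmul, LinearMap.smul_apply]
  rw [show (∑ n : Fin (k+1), if h : p < n then c • F a₀ (Function.update (Fin.removeNth p a) (n.pred (by rintro rfl; exact absurd h (Fin.not_lt_zero _))) (mul (a p) (a n) - mul (a n) (a p))) else 0)
      = c • (∑ n : Fin (k+1), if h : p < n then F a₀ (Function.update (Fin.removeNth p a) (n.pred (by rintro rfl; exact absurd h (Fin.not_lt_zero _))) (mul (a p) (a n) - mul (a n) (a p))) else 0) from by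
    rw [Finset.smul_sum]
    exact Finset.sum_congr rfl (fun n _ => by split <;> simp)]
  rw [← smul_sub, ← smul_add, ← smul_add]

lemma rsymD_sum (mul : A →ₗ[K] A →ₗ[K] A)
    (r : M →ₗ[K] A →ₗ[K] M) (l : A →ₗ[K] M →ₗ[K] M)
    {k : ℕ} (p : Fin (k+1)) {ι : Type*} (s : Finset ι) (F : ι → A → (Fin k → A) → M)
    (a₀ : A) (a : Fin (k+1) → A) :
    rsymD mul r l p (fun x y => ∑ t ∈ s, F t x y) a₀ a
      = ∑ t ∈ s, rsymD mul r l p (F t) a₀ a := by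
  classical
  induction s using Finset.induction with
  | empty => simp [rsymD]
  | insert _ _ hni ih =>
      rw [show (fun x y => ∑ t ∈ insert _ _, F t x y)
          = fun x y => F _ x y + ∑ t ∈ _, F t x y from
        funext fun x => funext fun y => Finset.sum_insert hni]
      rw [rsymD_add, ih, Finset.sum_insert hni]

/-- For a right-symmetric algebra `A` and an `A`-module `M`, the operators `D_i`
endow the right-symmetric cochain complex with a pre-simplicial structure:
`D_j D_i = D_i D_{j−1}` for `i < j` (here with 0-based indices: for `i ≤ j` one has
`D_{j.succ} ∘ D_i = D_{i.castSucc} ∘ D_j`); consequently `d_rsym² = 0`.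
Cochains are functions `ψ(a₀; a₁,…,a_k)` underlying a map linear in `a₀` and
alternating multilinear in `a₁,…,a_k`, encoded by `Ψ : A →ₗ[K] A [⋀^Fin k]→ₗ[K] M`. -/
theorem rsym_presimplicial
    (mul : A →ₗ[K] A →ₗ[K] A)
    (hrs : ∀ a b c : A,
      mul (mul a b) c - mul a (mul b c) = mul (mul a c) b - mul a (mul c b))
    (r : M →ₗ[K] A →ₗ[K] M) (l : A →ₗ[K] M →ₗ[K] M)
    (hMAA : ∀ (m : M) (a b : A),
      r m (mul a b - mul b a) - r (r m a) b + r (r m b) a = 0)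
    (hAAM : ∀ (a b : A) (m : M),
      r (l a m) b - l a (r m b) - l (mul a b) m + l a (l b m) = 0)
    {k : ℕ} (Ψ : A →ₗ[K] (A [⋀^Fin k]→ₗ[K] M)) :
    (∀ i j : Fin (k + 1), (i : ℕ) ≤ (j : ℕ) →
      ∀ (a₀ : A) (a : Fin (k + 2) → A),
        rsymD mul r l j.succ (rsymD mul r l i (fun x y => Ψ x y)) a₀ a
          = rsymD mul r l i.castSucc (rsymD mul r l j (fun x y => Ψ x y)) a₀ a) ∧
    (∀ (a₀ : A) (a : Fin (k + 2) → A),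
      rsymd mul r l (rsymd mul r l (fun x y => Ψ x y)) a₀ a = 0) := by

  have hψsub : ∀ (u v : A) (t : Fin k → A), Ψ (u - v) t = Ψ u t - Ψ v t := by
    intro u v t
    rw [map_sub]
    rfl
  have hψslot : ∀ (z : A) (t : Fin k → A) (s : Fin k) (w₁ w₂ : A),
      Ψ z (Function.update t s (w₁ + w₂))
        = Ψ z (Function.update t s w₁) + Ψ z (Function.update t s w₂) := by
    intro z t s w₁ w₂
    exact (Ψ z).map_update_add t s w₁ w₂
  have key : ∀ i j : Fin (k + 1), (i : ℕ) ≤ (j : ℕ) →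
      ∀ (a₀ : A) (a : Fin (k + 2) → A),
        rsymD mul r l j.succ (rsymD mul r l i (fun x y => Ψ x y)) a₀ a
          = rsymD mul r l i.castSucc (rsymD mul r l j (fun x y => Ψ x y)) a₀ a :=
    fun i j hij a₀ a =>
      part1 mul hrs r l hMAA hAAM (fun x y => Ψ x y) hψsub hψslot i j hij a₀ a
  refine ⟨key, ?_⟩
  intro a₀ a
  have expand : rsymd mul r l (rsymd mul r l (fun x y => Ψ x y)) a₀ a
      = ∑ z ∈ (Finset.univ ×ˢ Finset.univ : Finset (Fin (k+2) × Fin (k+1))),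
          ((-1 : ℤ) ^ ((z.1 : ℕ) + (z.2 : ℕ)))
            • rsymD mul r l z.1 (rsymD mul r l z.2 (fun x y => Ψ x y)) a₀ a := by
    rw [Finset.sum_product]
    show (∑ q : Fin (k+2), ((-1 : ℤ) ^ (q : ℕ)) • rsymD mul r l q
        (fun x y => ∑ p : Fin (k+1), ((-1 : ℤ) ^ (p : ℕ)) •
          rsymD mul r l p (fun x y => Ψ x y) x y) a₀ a) = _
    apply Finset.sum_congr rfl
    intro q _
    rw [rsymD_sum mul r l q Finset.univ
      (fun p : Fin (k+1) => fun x y => ((-1 : ℤ) ^ (p : ℕ)) • rsymD mul r l p (fun x y => Ψ x y) x y)]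
    rw [Finset.smul_sum]
    apply Finset.sum_congr rfl
    intro p _
    rw [rsymD_zsmul, smul_smul, ← pow_add]
  rw [expand]
  apply Finset.sum_involution (fun (z : Fin (k+2) × Fin (k+1)) _ =>
    if h : (z.1 : ℕ) ≤ (z.2 : ℕ)
      then ((⟨(z.2 : ℕ) + 1, by have := z.2.isLt; omega⟩ : Fin (k+2)),
            (⟨(z.1 : ℕ), by have := z.2.isLt; omega⟩ : Fin (k+1)))
      else ((⟨(z.2 : ℕ), by have := z.2.isLt; omega⟩ : Fin (k+2)),
            (⟨(z.1 : ℕ) - 1, by have := z.1.isLt; omega⟩ : Fin (k+1))))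
  · -- f a + f (g a) = 0
    rintro ⟨q, p⟩ hz
    dsimp only
    by_cases h : (q : ℕ) ≤ (p : ℕ)
    · simp only [dif_pos h]
      have hqk : (q : ℕ) < k + 1 := by have := p.isLt; omega
      have h1 : (⟨(p : ℕ) + 1, by have := p.isLt; omega⟩ : Fin (k+2)) = Fin.succ p := by
        apply Fin.ext; simp [Fin.val_succ]
      have h2 : Fin.castSucc (⟨(q : ℕ), hqk⟩ : Fin (k+1)) = q := by apply Fin.ext; simp
      have hv : ((⟨(q : ℕ), hqk⟩ : Fin (k+1)) : ℕ) = (q : ℕ) := rfl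
      have hpart := key ⟨(q : ℕ), hqk⟩ p h a₀ a
      rw [h1, hpart, h2, ← add_smul,
        show ((-1:ℤ)^((q:ℕ)+(p:ℕ)) + (-1:ℤ)^((p:ℕ)+1+(q:ℕ))) = 0 from by
          rw [show (p:ℕ)+1+(q:ℕ) = ((q:ℕ)+(p:ℕ))+1 from by omega, pow_succ]; ring,
        zero_smul]
    · simp only [dif_neg h]
      have hq1 : (q : ℕ) - 1 < k + 1 := by have := q.isLt; omega
      have hpk : (p : ℕ) < k + 2 := by have := p.isLt; omega
      have h1 : (⟨(q : ℕ) - 1, hq1⟩ : Fin (k+1)).succ = q := by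
        apply Fin.ext; simp [Fin.val_succ]; omega
      have h2 : (⟨(p : ℕ), hpk⟩ : Fin (k+2)) = Fin.castSucc p := by apply Fin.ext; simp
      have hv : ((⟨(q : ℕ) - 1, hq1⟩ : Fin (k+1)) : ℕ) = (q : ℕ) - 1 := rfl
      have hpart := key p ⟨(q : ℕ) - 1, hq1⟩ (show (p:ℕ) ≤ (q:ℕ)-1 from by omega) a₀ a
      rw [h2, ← hpart, h1, ← add_smul,
        show ((-1:ℤ)^((q:ℕ)+(p:ℕ)) + (-1:ℤ)^((p:ℕ)+((q:ℕ)-1))) = 0 from by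
          rw [show (q:ℕ)+(p:ℕ) = ((p:ℕ)+((q:ℕ)-1))+1 from by omega, pow_succ]; ring,
        zero_smul]
  · -- g a ≠ a when f a ≠ 0
    rintro ⟨q, p⟩ hz _
    dsimp only
    by_cases h : (q : ℕ) ≤ (p : ℕ)
    · simp only [dif_pos h]
      intro e
      have := congrArg (fun w : Fin (k+2) × Fin (k+1) => (w.1 : ℕ)) e
      dsimp at this
      omega
    · simp only [dif_neg h]
      intro e
      have := congrArg (fun w : Fin (k+2) × Fin (k+1) => (w.1 : ℕ)) e
      dsimp at this
      omega
  · -- involution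
    rintro ⟨q, p⟩ hz
    dsimp only
    by_cases h : (q : ℕ) ≤ (p : ℕ)
    · simp only [dif_pos h]
      rw [dif_neg (by omega : ¬ ((p : ℕ) + 1 ≤ (q : ℕ)))]
      rw [Prod.ext_iff]
      constructor <;> (apply Fin.ext; simp) <;> omega
    · simp only [dif_neg h]
      rw [dif_pos (by omega : ((p : ℕ) ≤ (q : ℕ) - 1))]
      rw [Prod.ext_iff]
      constructor <;> (apply Fin.ext; simp) <;> omega
  · rintro ⟨q, p⟩ hz
    simp [Finset.mem_product]
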